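/- Let A ∈ ℤ^{m×n}, d ∈ ℤ^m, r ∈ ℤⁿ with r_i > 0, r_max = lcm(r_i), c_i = r_max/r_i. Suppose b⁽⁰⁾,…,b⁽ⁿ⁻ᵐ⁾ ∈ ℤ^{n+1} is a basis of the kernel of the extended system (i.e., vectors w ∈ ℤ^{n+1} with coordinates indexed 0,…,n, written as solutions of the homogeneous system obtained from the lattice construction so that w_i = 2c_i x_i - w_0 for some x with A x = d·(w_0/r_max) when w_0 = r_max). Then an integer combination w = Σ u_k b⁽ᵏ⁾ with w_0 = r_max corresponds to a solution x of A x = d, 0 ≤ x ≤ r, via x_i = (w_i + r_max)/(2 c_i), if and only if -r_max ≤ w_i ≤ r_max for all 1 ≤ i ≤ n and each w_i + r_max is divisible by 2 c_i. -/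
import Mathlib


theorem stmt_3 (m n : ℕ) (A : Matrix (Fin m) (Fin n) ℤ) (d : Fin m → ℤ)
    (r : Fin n → ℤ) (hr : ∀ i, 0 < r i)
    (rmax : ℤ) (hrmax : rmax = Finset.univ.lcm r)
    (c : Fin n → ℤ) (hc : ∀ i, c i = rmax / r i)
    (b : Fin (n - m + 1) → (Fin (n + 1) → ℤ))
    (hb : ∀ w : Fin (n + 1) → ℤ,
      (∃ u : Fin (n - m + 1) → ℤ, w = ∑ k, u k • b k) ↔
        ∃ (x : Fin n → ℤ) (t : ℤ), w 0 = rmax * t ∧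
          (∀ i : Fin n, w i.succ = 2 * c i * x i - rmax * t) ∧
          A.mulVec x = t • d)
    (w : Fin (n + 1) → ℤ)
    (hw : ∃ u : Fin (n - m + 1) → ℤ, w = ∑ k, u k • b k)
    (hw0 : w 0 = rmax) :
    (∃ x : Fin n → ℤ, A.mulVec x = d ∧ (∀ i, 0 ≤ x i ∧ x i ≤ r i) ∧
        (∀ i : Fin n, x i = (w i.succ + rmax) / (2 * c i))) ↔
      (∀ i : Fin n, (-rmax ≤ w i.succ ∧ w i.succ ≤ rmax) ∧
        (2 * c i) ∣ (w i.succ + rmax)) := by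
  have hdvd : ∀ i, r i ∣ rmax := fun i => hrmax ▸ Finset.dvd_lcm (Finset.mem_univ i)
  have hne : rmax ≠ 0 := by
    rw [hrmax]
    rw [Ne, Finset.lcm_eq_zero_iff]
    intro h
    simp only [Set.mem_image, Finset.mem_coe, Finset.mem_univ, true_and] at h
    obtain ⟨i, hi⟩ := h
    exact absurd hi.symm (hr i).ne
  have hnn : 0 ≤ rmax := by
    have h1 : normalize rmax = rmax := by rw [hrmax]; exact Finset.normalize_lcm
    exact Int.nonneg_of_normalize_eq_self h1
  have hrpos : 0 < rmax := lt_of_le_of_ne hnn (Ne.symm hne)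
  have hcr : ∀ i, c i * r i = rmax := fun i => by
    rw [hc]; exact Int.ediv_mul_cancel (hdvd i)
  have hcpos : ∀ i, 0 < c i := fun i => by nlinarith [hcr i, hr i, hrpos]
  obtain ⟨x, t, h0, hsucc, hAx⟩ := (hb w).mp hw
  have ht : t = 1 := by
    have : rmax * t = rmax * 1 := by rw [mul_one, ← h0, hw0]
    exact mul_left_cancel₀ hne this
  subst ht
  rw [mul_one] at hsucc
  rw [one_smul] at hAx
  have hkey : ∀ i : Fin n, w i.succ + rmax = 2 * c i * x i := fun i => by
    rw [hsucc i]; ring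
  have h2c : ∀ i : Fin n, (0:ℤ) < 2 * c i := fun i => by linarith [hcpos i]
  constructor
  · rintro ⟨x', _, hbnd, hform⟩ i
    have hx' : x' i = x i := by
      rw [hform i, hkey i, Int.mul_ediv_cancel_left _ (h2c i).ne']
    obtain ⟨h1, h2⟩ := hbnd i
    rw [hx'] at h1 h2
    refine ⟨⟨?_, ?_⟩, ⟨x i, hkey i⟩⟩
    · rw [hsucc i]; nlinarith [hcpos i]
    · rw [hsucc i]; nlinarith [hcr i, hcpos i]
  · intro h
    refine ⟨x, hAx, fun i => ?_, fun i => ?_⟩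
    · obtain ⟨⟨h1, h2⟩, _⟩ := h i
      rw [hsucc i] at h1 h2
      have hub : 2 * c i * x i ≤ 2 * c i * r i := by nlinarith [hcr i]
      have hlb : 2 * c i * 0 ≤ 2 * c i * x i := by linarith
      exact ⟨le_of_mul_le_mul_left hlb (h2c i), le_of_mul_le_mul_left hub (h2c i)⟩
    · rw [hkey i, Int.mul_ediv_cancel_left _ (h2c i).ne']
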